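/- The ensemble E admits a contamination-dependent bound strictly below its supremum: for every x ∈ ℝⁿ and every contamination vector K ∈ ℝⁿ that is nonzero in at most k coordinates, one has E(x, x + K) ≤ sqrt(5 + (k/(1 + k))²), which is strictly less than √6. -/

import Mathlib

open Finset

/-- The Euclidean distance `e(x,y) = sqrt(∑_t (x_t - y_t)²)`. -/
noncomputable def eucDist {m : ℕ} (x y : Fin m → ℝ) : ℝ :=
  Real.sqrt (∑ t, (x t - y t) ^ 2)

/-- The Log-distance `ℓ(x,y) = ∑_t log (1 + |x_t - y_t|)`. -/
noncomputable def logDist {m : ℕ} (x y : Fin m → ℝ) : ℝ :=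
  ∑ t, Real.log (1 + |x t - y t|)

/-- The raw Edit distance: the number of coordinates where `x` and `y` differ. -/
noncomputable def editDist {m : ℕ} (x y : Fin m → ℝ) : ℕ :=
  {t : Fin m | x t ≠ y t}.ncard

/-- The median of `w` reals: the `(w+1)/2`-th smallest among them
(`0`-indexed position `w / 2` in the sorted list, which for odd `w` equals `(w-1)/2`). -/
noncomputable def median {w : ℕ} (v : Fin w → ℝ) : ℝ :=
  ((List.ofFn v).mergeSort (· ≤ ·)).getD (w / 2) 0

/-- The sliding median `m⃗ : ℝⁿ → ℝ^{n-w+1}`. -/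
noncomputable def slidingMedian (n w : ℕ) (h1 : 1 ≤ w) (h2 : w ≤ n)
    (x : Fin n → ℝ) : Fin (n - w + 1) → ℝ :=
  fun i => median (fun j : Fin w =>
    x ⟨i.val + j.val, by have hi := i.isLt; have hj := j.isLt; omega⟩)

/-- The metric-preserving scaling `S(t) = 1 - 1/(1+t)`. -/
noncomputable def metricScale (t : ℝ) : ℝ := 1 - 1 / (1 + t)

/-- The ensemble metric `E`. -/
noncomputable def ensemble (n w : ℕ) (h1 : 1 ≤ w) (h2 : w ≤ n)
    (x y : Fin n → ℝ) : ℝ :=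
  Real.sqrt (
    metricScale (eucDist x y) ^ 2 +
    metricScale (logDist x y) ^ 2 +
    metricScale (editDist x y : ℝ) ^ 2 +
    metricScale (eucDist (slidingMedian n w h1 h2 x) (slidingMedian n w h1 h2 y)) ^ 2 +
    metricScale (logDist (slidingMedian n w h1 h2 x) (slidingMedian n w h1 h2 y)) ^ 2 +
    metricScale (editDist (slidingMedian n w h1 h2 x) (slidingMedian n w h1 h2 y) : ℝ) ^ 2)

lemma metricScale_nonneg {t : ℝ} (ht : 0 ≤ t) : 0 ≤ metricScale t := by
  unfold metricScale
  have h1 : (0:ℝ) < 1 + t := by linarith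
  have : 1 / (1 + t) ≤ 1 := by
    rw [div_le_one h1]; linarith
  linarith

lemma metricScale_lt_one {t : ℝ} (ht : 0 ≤ t) : metricScale t < 1 := by
  unfold metricScale
  have h1 : (0:ℝ) < 1 + t := by linarith
  have : 0 < 1 / (1 + t) := by positivity
  linarith

lemma metricScale_sq_le_one {t : ℝ} (ht : 0 ≤ t) : metricScale t ^ 2 ≤ 1 := by
  have h0 := metricScale_nonneg ht
  have h1 := metricScale_lt_one ht
  nlinarith

lemma eucDist_nonneg {m : ℕ} (x y : Fin m → ℝ) : 0 ≤ eucDist x y :=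
  Real.sqrt_nonneg _

lemma logDist_nonneg {m : ℕ} (x y : Fin m → ℝ) : 0 ≤ logDist x y := by
  unfold logDist
  apply Finset.sum_nonneg
  intro t _
  apply Real.log_nonneg
  have := abs_nonneg (x t - y t)
  linarith

/-- Contamination-dependent bound for the ensemble `E`: if `K` is nonzero in at most `k`
coordinates then `E(x, x + K) ≤ sqrt(5 + (k/(1+k))²) < √6`. -/
theorem ensemble_contamination_bound (n w : ℕ) (hn : 3 ≤ n) (hodd : Odd w) (hw3 : 3 ≤ w)
    (hwn : w ≤ n) (k : ℕ) (x K : Fin n → ℝ)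
    (hK : (Function.support K).ncard ≤ k) :
    ensemble n w (by omega) hwn x (fun t => x t + K t) ≤
      Real.sqrt (5 + ((k : ℝ) / (1 + (k : ℝ))) ^ 2) ∧
    Real.sqrt (5 + ((k : ℝ) / (1 + (k : ℝ))) ^ 2) < Real.sqrt 6 := by
  have q : ℝ := (k : ℝ) / (1 + (k : ℝ))
  have hkpos : (0:ℝ) < 1 + (k:ℝ) := by positivity
  have hq0 : (0:ℝ) ≤ (k : ℝ) / (1 + (k : ℝ)) := by positivity
  have hq1 : (k : ℝ) / (1 + (k : ℝ)) < 1 := by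
    rw [div_lt_one hkpos]; linarith
  constructor
  · -- main bound
    set y : Fin n → ℝ := fun t => x t + K t with hy
    have hedit : (editDist x y : ℝ) ≤ (k : ℝ) := by
      have : editDist x y ≤ k := by
        unfold editDist
        have hset : {t : Fin n | x t ≠ y t} = Function.support K := by
          ext t
          simp [hy, Function.mem_support, sub_eq_zero, eq_comm]
        rw [hset]; exact hK
      exact_mod_cast this
    have heditnn : (0:ℝ) ≤ (editDist x y : ℝ) := by positivity
    have hSedit : metricScale (editDist x y : ℝ) ≤ (k : ℝ) / (1 + (k : ℝ)) := by
      unfold metricScale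
      have h1 : (0:ℝ) < 1 + (editDist x y : ℝ) := by linarith
      have : 1 / (1 + (k:ℝ)) ≤ 1 / (1 + (editDist x y : ℝ)) := by
        apply one_div_le_one_div_of_le h1; linarith
      have hkk : (k:ℝ) / (1 + (k:ℝ)) = 1 - 1 / (1 + (k:ℝ)) := by
        field_simp
        ring
      rw [hkk]; linarith
    have hSeditsq : metricScale (editDist x y : ℝ) ^ 2 ≤ ((k:ℝ) / (1 + (k:ℝ))) ^ 2 := by
      have h0 := metricScale_nonneg heditnn
      nlinarith
    unfold ensemble
    apply Real.sqrt_le_sqrt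
    have t1 := metricScale_sq_le_one (eucDist_nonneg x y)
    have t2 := metricScale_sq_le_one (logDist_nonneg x y)
    have t4 := metricScale_sq_le_one
      (eucDist_nonneg (slidingMedian n w (by omega) hwn x) (slidingMedian n w (by omega) hwn y))
    have t5 := metricScale_sq_le_one
      (logDist_nonneg (slidingMedian n w (by omega) hwn x) (slidingMedian n w (by omega) hwn y))
    have t6 := metricScale_sq_le_one
      (by positivity : (0:ℝ) ≤ (editDist (slidingMedian n w (by omega) hwn x) (slidingMedian n w (by omega) hwn y) : ℝ))
    linarith
  · apply Real.sqrt_lt_sqrt (by positivity)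
    nlinarith
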